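/- arXiv:2006.12428 — 4 statements merged into one kernel-verified Lean document; each statement's English description precedes it below -/
import Mathlib

section
/- Let f be sufficiently smooth and let a_1, ..., a_m be pairwise distinct. Then the k_1-th partial derivative of the divided difference f[a_1, ..., a_m] with respect to a_1 equals k_1! · f[a_1^{(k_1+1)}, a_2, ..., a_m], where a_1^{(k_1+1)} denotes a_1 repeated k_1+1 times. -/
open MeasureTheory

/-- Divided difference of `f` at (pairwise distinct) points `x 0, …, x (m-1)`,
in Lagrange polynomial form. -/
noncomputable def divDiff {m : ℕ} (f : ℝ → ℝ) (x : Fin m → ℝ) : ℝ :=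
  ∑ j, f (x j) / ∏ k ∈ Finset.univ.erase j, (x j - x k)

/-- Divided difference of `f` at `n+1` (not necessarily distinct) points given by the
Hermite–Genocchi integral representation over the standard simplex. -/
noncomputable def hgDivDiff {n : ℕ} (f : ℝ → ℝ) (a : Fin (n + 1) → ℝ) : ℝ :=
  ∫ t in {t : Fin n → ℝ | (∀ i, 0 ≤ t i) ∧ ∑ i, t i ≤ 1},
    iteratedDeriv n f ((∑ i, t i * a i.castSucc) + (1 - ∑ i, t i) * a (Fin.last n))

/-!
For distinct nodes, the Lagrange form and the Hermite–Genocchi integral over the corner simplex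
`{t | 0 ≤ t, ∑ t ≤ 1}` obey the same recurrence
`(x_n - x_{n+1}) f[x_0, …, x_{n+1}] = f[x_0, …, x_n] - f[x_0, …, x_{n-1}, x_{n+1}]`
(for the integral: Fubini in the last coordinate and the fundamental theorem of calculus), so they
agree. In the integral the first node `y` enters only through `t 0 * y`, so differentiating `k`
times under the integral sign yields `∫ t 0 ^ k * f⁽ᵏ⁺ᵐ⁾(…)`. Finally, a repeated first node can be
traded for one power of its weight:
`(j + 1) ∫ t 0 ^ j F(x_0, x_0, x_1, …) = ∫ t 0 ^ (j + 1) F(x_0, x_1, …)`;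
applied `k` times this turns `∫ t 0 ^ k …` into `k! f[a_0^(k+1), a_1, …, a_m]`.
-/

open Finset
open scoped Nat

section DivDiffOn

variable {ι : Type*} [DecidableEq ι]

noncomputable def divDiffOn (s : Finset ι) (f : ℝ → ℝ) (x : ι → ℝ) : ℝ :=
  ∑ j ∈ s, f (x j) / ∏ k ∈ s.erase j, (x j - x k)

theorem divDiffOn_map {κ : Type*} [DecidableEq κ] (s : Finset ι) (e : ι ↪ κ) (f : ℝ → ℝ)
    (x : κ → ℝ) : divDiffOn (s.map e) f x = divDiffOn s f (x ∘ e) := by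
  simp only [divDiffOn, sum_map, ← map_erase, prod_map, Function.comp_apply]

theorem divDiffOn_erase {s : Finset ι} {f : ℝ → ℝ} {x : ι → ℝ} (hx : Set.InjOn x s) {j : ι}
    (hj : j ∈ s) :
    divDiffOn (s.erase j) f x = ∑ k ∈ s, f (x k) * (x k - x j) / ∏ l ∈ s.erase k, (x k - x l) := by
  rw [← sum_erase _ (by rw [sub_self, mul_zero, zero_div]), divDiffOn]
  refine sum_congr rfl fun k hk => ?_
  obtain ⟨hkj, hks⟩ := mem_erase.mp hk
  have hne : x k - x j ≠ 0 := sub_ne_zero.mpr fun h => hkj (hx hks hj h)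
  rw [← mul_prod_erase (s.erase k) _ (mem_erase.mpr ⟨Ne.symm hkj, hj⟩), erase_right_comm,
    mul_comm (f (x k)), mul_div_mul_left _ _ hne]

theorem sub_mul_divDiffOn {s : Finset ι} (f : ℝ → ℝ) {x : ι → ℝ} (hx : Set.InjOn x s) {i j : ι}
    (hi : i ∈ s) (hj : j ∈ s) :
    (x i - x j) * divDiffOn s f x = divDiffOn (s.erase j) f x - divDiffOn (s.erase i) f x := by
  rw [divDiffOn_erase hx hi, divDiffOn_erase hx hj, ← sum_sub_distrib, divDiffOn, mul_sum]
  refine sum_congr rfl fun k _ => ?_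
  ring

end DivDiffOn

theorem divDiff_comp_succAbove {n : ℕ} (f : ℝ → ℝ) (x : Fin (n + 1) → ℝ) (j : Fin (n + 1)) :
    divDiff f (x ∘ j.succAbove) = divDiffOn (univ.erase j) f x := by
  rw [Fin.univ_succAbove n j, erase_cons, divDiffOn_map]
  rfl

theorem sub_mul_divDiff {n : ℕ} (f : ℝ → ℝ) {x : Fin (n + 1) → ℝ} (hx : Function.Injective x)
    (i j : Fin (n + 1)) :
    (x i - x j) * divDiff f x = divDiff f (x ∘ j.succAbove) - divDiff f (x ∘ i.succAbove) := by
  rw [divDiff_comp_succAbove, divDiff_comp_succAbove]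
  exact sub_mul_divDiffOn f hx.injOn (mem_univ i) (mem_univ j)

def cornerSimplex (n : ℕ) : Set (Fin n → ℝ) := {t | (∀ i, 0 ≤ t i) ∧ ∑ i, t i ≤ 1}

theorem isClosed_cornerSimplex (n : ℕ) : IsClosed (cornerSimplex n) := by
  simp only [cornerSimplex, Set.ofPred_and, Set.ofPred_forall]
  exact (isClosed_iInter fun i => isClosed_le continuous_const (continuous_apply i)).inter
    (isClosed_le (continuous_finsetSum _ fun i _ => continuous_apply i) continuous_const)

theorem measurableSet_cornerSimplex (n : ℕ) : MeasurableSet (cornerSimplex n) :=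
  (isClosed_cornerSimplex n).measurableSet

theorem cornerSimplex_subset_Icc (n : ℕ) : cornerSimplex n ⊆ Set.Icc 0 1 := fun _ ht =>
  ⟨ht.1, fun i => (single_le_sum (fun j _ => ht.1 j) (mem_univ i)).trans ht.2⟩

theorem isCompact_cornerSimplex (n : ℕ) : IsCompact (cornerSimplex n) :=
  isCompact_Icc.of_isClosed_subset (isClosed_cornerSimplex n) (cornerSimplex_subset_Icc n)

theorem integrableOn_cornerSimplex {n : ℕ} {g : (Fin n → ℝ) → ℝ} (hg : Continuous g) :
    IntegrableOn g (cornerSimplex n) :=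
  hg.continuousOn.integrableOn_compact (isCompact_cornerSimplex n)

theorem insertNth_mem_cornerSimplex_iff {n : ℕ} (i : Fin (n + 1)) (u : ℝ) (t : Fin n → ℝ) :
    i.insertNth u t ∈ cornerSimplex (n + 1) ↔
      t ∈ cornerSimplex n ∧ u ∈ Set.Icc 0 (1 - ∑ j, t j) := by
  simp only [cornerSimplex, Set.mem_ofPred_eq, Set.mem_Icc, i.forall_iff_succAbove,
    Fin.insertNth_apply_same, Fin.insertNth_apply_succAbove, Fin.sum_insertNth]
  constructor
  · rintro ⟨⟨hu, ht⟩, hsum⟩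
    exact ⟨⟨ht, by linarith [sum_nonneg fun j (_ : j ∈ univ) => ht j]⟩, hu, by linarith⟩
  · rintro ⟨⟨ht, -⟩, hu, hsum⟩
    exact ⟨⟨hu, ht⟩, by linarith⟩

theorem setIntegral_cornerSimplex_succ {n : ℕ} (i : Fin (n + 1)) {g : (Fin (n + 1) → ℝ) → ℝ}
    (hg : Continuous g) :
    ∫ t in cornerSimplex (n + 1), g t =
      ∫ t in cornerSimplex n, ∫ u in (0 : ℝ)..1 - ∑ j, t j, g (i.insertNth u t) := by
  set e := (MeasurableEquiv.piFinSuccAbove (fun _ : Fin (n + 1) => ℝ) i).symm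
  have he : MeasurePreserving e (volume.prod volume) volume :=
    (volume_preserving_piFinSuccAbove (fun _ : Fin (n + 1) => ℝ) i).symm
  set T := e ⁻¹' cornerSimplex (n + 1)
  have hT : MeasurableSet T := e.measurable (measurableSet_cornerSimplex _)
  have hint : Integrable (T.indicator fun p => g (e p)) (volume.prod volume) :=
    ((he.integrableOn_comp_preimage e.measurableEmbedding).mpr
      (integrableOn_cornerSimplex hg)).integrable_indicator hT
  rw [← he.setIntegral_preimage_emb e.measurableEmbedding, ← integral_indicator hT,
    integral_prod_symm _ hint, ← integral_indicator (measurableSet_cornerSimplex n)]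
  congr 1 with t
  have hfiber : ∀ u, T.indicator (fun p => g (e p)) (u, t) =
      (cornerSimplex n).indicator (fun _ => (Set.Icc 0 (1 - ∑ j, t j)).indicator
        (fun u => g (i.insertNth u t)) u) t := by
    intro u
    by_cases ht : t ∈ cornerSimplex n <;> by_cases hu : u ∈ Set.Icc 0 (1 - ∑ j, t j) <;>
      simp [T, e, Set.indicator, insertNth_mem_cornerSimplex_iff, ht, hu,
        MeasurableEquiv.piFinSuccAbove_symm_apply, Fin.insertNthEquiv]
  simp only [hfiber]
  by_cases ht : t ∈ cornerSimplex n
  · simp only [Set.indicator_of_mem ht]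
    rw [integral_indicator measurableSet_Icc, integral_Icc_eq_integral_Ioc,
      ← intervalIntegral.integral_of_le (by linarith [ht.2])]
  · simp [Set.indicator_of_notMem ht]

noncomputable def simplexPoint {n : ℕ} (x : Fin (n + 1) → ℝ) (t : Fin n → ℝ) : ℝ :=
  ∑ i, t i * x i.castSucc + (1 - ∑ i, t i) * x (Fin.last n)

@[fun_prop]
theorem continuous_simplexPoint {n : ℕ} (x : Fin (n + 1) → ℝ) : Continuous (simplexPoint x) := by
  unfold simplexPoint; fun_prop

theorem hgDivDiff_eq_setIntegral {n : ℕ} (f : ℝ → ℝ) (x : Fin (n + 1) → ℝ) :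
    hgDivDiff f x = ∫ t in cornerSimplex n, iteratedDeriv n f (simplexPoint x t) := rfl

theorem simplexPoint_insertNth {n : ℕ} (x : Fin (n + 2) → ℝ) (p : Fin (n + 1)) (u : ℝ)
    (t : Fin n → ℝ) :
    simplexPoint x (p.insertNth u t) =
      simplexPoint (x ∘ p.castSucc.succAbove) t + u * (x p.castSucc - x (Fin.last _)) := by
  simp only [simplexPoint, Fin.sum_univ_succAbove _ p, Fin.insertNth_apply_same,
    Fin.insertNth_apply_succAbove, Function.comp_apply, Fin.castSucc_succAbove_castSucc,
    Fin.succAbove_ne_last_last (Fin.castSucc_lt_last p).ne]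
  ring

theorem simplexPoint_comp_succAbove_last {n : ℕ} (x : Fin (n + 2) → ℝ) (t : Fin n → ℝ) :
    simplexPoint (x ∘ (Fin.last (n + 1)).succAbove) t =
      simplexPoint (x ∘ (Fin.last n).castSucc.succAbove) t +
        (1 - ∑ i, t i) * (x (Fin.last n).castSucc - x (Fin.last _)) := by
  simp only [simplexPoint, Function.comp_apply, Fin.succAbove_last,
    Fin.castSucc_succAbove_castSucc, Fin.succAbove_ne_last_last (Fin.castSucc_lt_last _).ne]
  ring

theorem integral_comp_add_mul_of_hasDerivAt {G G' : ℝ → ℝ} (hG : ∀ z, HasDerivAt G (G' z) z)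
    (hG' : Continuous G') (q A : ℝ) {c : ℝ} (hc : c ≠ 0) :
    ∫ u in (0 : ℝ)..A, G' (q + u * c) = (G (q + A * c) - G q) / c := by
  have hderiv (u : ℝ) : HasDerivAt (fun u => G (q + u * c) / c) (G' (q + u * c)) u := by
    have := ((hG _).comp u (((hasDerivAt_id u).mul_const c).const_add q)).div_const c
    rwa [id, one_mul, mul_div_cancel_right₀ _ hc] at this
  rw [intervalIntegral.integral_eq_sub_of_hasDerivAt (fun u _ => hderiv u)
    ((hG'.comp (by fun_prop)).intervalIntegrable _ _)]
  simp only [zero_mul, add_zero, sub_div]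

theorem sub_mul_setIntegral_deriv_simplexPoint {n : ℕ} {G G' : ℝ → ℝ}
    (hG : ∀ z, HasDerivAt G (G' z) z) (hG' : Continuous G') {x : Fin (n + 2) → ℝ}
    (hx : x (Fin.last n).castSucc ≠ x (Fin.last (n + 1))) :
    (x (Fin.last n).castSucc - x (Fin.last (n + 1))) *
        ∫ t in cornerSimplex (n + 1), G' (simplexPoint x t) =
      (∫ t in cornerSimplex n, G (simplexPoint (x ∘ (Fin.last (n + 1)).succAbove) t)) -
        ∫ t in cornerSimplex n, G (simplexPoint (x ∘ (Fin.last n).castSucc.succAbove) t) := by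
  have hc := sub_ne_zero.mpr hx
  have hGc : Continuous G := continuous_iff_continuousAt.mpr fun z => (hG z).continuousAt
  have hint (y : Fin (n + 1) → ℝ) :
      IntegrableOn (fun t => G (simplexPoint y t)) (cornerSimplex n) :=
    integrableOn_cornerSimplex (hGc.comp (continuous_simplexPoint y))
  rw [setIntegral_cornerSimplex_succ (g := fun t => G' (simplexPoint x t)) (Fin.last n)
      (hG'.comp (continuous_simplexPoint x)),
    ← integral_const_mul, ← integral_sub (hint _) (hint _)]
  refine setIntegral_congr_fun (measurableSet_cornerSimplex n) fun t _ => ?_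
  simp only [simplexPoint_insertNth]
  rw [integral_comp_add_mul_of_hasDerivAt hG hG' _ _ hc, simplexPoint_comp_succAbove_last,
    mul_div_cancel₀ _ hc]

theorem volume_cornerSimplex_zero : volume (cornerSimplex 0) = 1 := by
  rw [show cornerSimplex 0 = Set.univ by ext t; simp [cornerSimplex], volume_pi,
    Measure.pi_univ, Finset.univ_eq_empty, prod_empty]

theorem ContDiff.hasDerivAt_iteratedDeriv {f : ℝ → ℝ} {N : ℕ} (hf : ContDiff ℝ N f) {n : ℕ}
    (hn : n < N) (z : ℝ) : HasDerivAt (iteratedDeriv n f) (iteratedDeriv (n + 1) f z) z := by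
  rw [iteratedDeriv_succ]
  exact ((hf.differentiable_iteratedDeriv n (by exact_mod_cast hn)) z).hasDerivAt

theorem divDiff_eq_hgDivDiff {n : ℕ} {f : ℝ → ℝ} (hf : ContDiff ℝ n f) {x : Fin (n + 1) → ℝ}
    (hx : Function.Injective x) : divDiff f x = hgDivDiff f x := by
  induction n with
  | zero =>
    simp [divDiff, hgDivDiff_eq_setIntegral, simplexPoint, measureReal_def,
      volume_cornerSimplex_zero]
  | succ n ih =>
    have hne : x (Fin.last n).castSucc ≠ x (Fin.last (n + 1)) := hx.ne (Fin.castSucc_lt_last _).ne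
    have hfn : ContDiff ℝ n f := hf.of_le (by exact_mod_cast n.le_succ)
    refine mul_left_cancel₀ (sub_ne_zero.mpr hne) ?_
    rw [sub_mul_divDiff f hx, ih hfn (hx.comp Fin.succAbove_right_injective),
      ih hfn (hx.comp Fin.succAbove_right_injective), hgDivDiff_eq_setIntegral f x,
      sub_mul_setIntegral_deriv_simplexPoint (hf.hasDerivAt_iteratedDeriv n.lt_succ_self)
        (hf.continuous_iteratedDeriv _ le_rfl) hne]
    rfl

theorem hasDerivAt_setIntegral_of_isCompact {α : Type*} [TopologicalSpace α] [T2Space α]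
    [MeasurableSpace α] [OpensMeasurableSpace α] {μ : Measure α} [IsFiniteMeasureOnCompacts μ]
    {K : Set α} (hK : IsCompact K) {F F' : ℝ → α → ℝ} (hF : Continuous (Function.uncurry F))
    (hF' : Continuous (Function.uncurry F')) (hderiv : ∀ y a, HasDerivAt (F · a) (F' y a) y)
    (y₀ : ℝ) :
    HasDerivAt (fun y => ∫ a in K, F y a ∂μ) (∫ a in K, F' y₀ a ∂μ) y₀ := by
  have : IsFiniteMeasure (μ.restrict K) := ⟨by simpa using hK.measure_lt_top⟩
  obtain ⟨M, hM⟩ := ((isCompact_closedBall y₀ 1).prod hK).exists_bound_of_continuousOn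
    hF'.continuousOn
  refine (hasDerivAt_integral_of_dominated_loc_of_deriv_le (bound := fun _ => M)
    (Metric.ball_mem_nhds y₀ one_pos)
    (Filter.Eventually.of_forall fun y => (hF.uncurry_left y).aestronglyMeasurable)
    ((hF.uncurry_left y₀).continuousOn.integrableOn_compact hK)
    (hF'.uncurry_left y₀).aestronglyMeasurable ?_ (integrable_const M)
    (Filter.Eventually.of_forall fun a y _ => hderiv y a)).2
  refine ae_restrict_of_forall_mem hK.measurableSet fun a ha y hy => ?_
  exact hM (y, a) ⟨Metric.ball_subset_closedBall hy, ha⟩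

/-- `t 0` is the barycentric weight of the node `x 0` in `simplexPoint x t`. -/
noncomputable def simplexMoment (F : ℝ → ℝ) (j : ℕ) {n : ℕ} (x : Fin (n + 2) → ℝ) : ℝ :=
  ∫ t in cornerSimplex (n + 1), t 0 ^ j * F (simplexPoint x t)

theorem hgDivDiff_eq_simplexMoment_zero {n : ℕ} (f : ℝ → ℝ) (x : Fin (n + 2) → ℝ) :
    hgDivDiff f x = simplexMoment (iteratedDeriv (n + 1) f) 0 x := by
  simp only [hgDivDiff_eq_setIntegral, simplexMoment, pow_zero, one_mul]

theorem simplexPoint_cons {n : ℕ} (y : ℝ) (x : Fin (n + 1) → ℝ) (t : Fin (n + 1) → ℝ) :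
    simplexPoint (Fin.cons y x) t = t 0 * y + simplexPoint (Fin.cons 0 x) t := by
  simp only [simplexPoint, Fin.sum_univ_succ, Fin.castSucc_zero, Fin.cons_zero,
    ← Fin.succ_castSucc, Fin.cons_succ, ← Fin.succ_last]
  ring

theorem hasDerivAt_simplexMoment_cons {G G' : ℝ → ℝ} (hG : ∀ z, HasDerivAt G (G' z) z)
    (hG' : Continuous G') (j : ℕ) {n : ℕ} (x : Fin (n + 1) → ℝ) (y : ℝ) :
    HasDerivAt (fun y => simplexMoment G j (Fin.cons y x))
      (simplexMoment G' (j + 1) (Fin.cons y x)) y := by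
  have hGc : Continuous G := continuous_iff_continuousAt.mpr fun z => (hG z).continuousAt
  have hmoment (H : ℝ → ℝ) (i : ℕ) (y : ℝ) : simplexMoment H i (Fin.cons y x) =
      ∫ t in cornerSimplex (n + 1), t 0 ^ i * H (t 0 * y + simplexPoint (Fin.cons 0 x) t) := by
    simp only [simplexMoment, simplexPoint_cons y x]
  simp only [hmoment]
  refine hasDerivAt_setIntegral_of_isCompact (isCompact_cornerSimplex _)
    (F := fun y t => t 0 ^ j * G (t 0 * y + simplexPoint (Fin.cons 0 x) t))
    (F' := fun y t => t 0 ^ (j + 1) * G' (t 0 * y + simplexPoint (Fin.cons 0 x) t))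
    (by simp only [Function.uncurry_def]; fun_prop) (by simp only [Function.uncurry_def]; fun_prop)
    (fun y t => ?_) y
  have := ((hG _).comp y (((hasDerivAt_id y).const_mul (t 0)).add_const
    (simplexPoint (Fin.cons 0 x) t))).const_mul (t 0 ^ j)
  exact this.congr_deriv (by simp only [id]; ring)

theorem iteratedDeriv_divDiff_cons {n k : ℕ} {f : ℝ → ℝ} (hf : ContDiff ℝ (k + (n + 1) : ℕ) f)
    {x : Fin (n + 1) → ℝ} (hx : Function.Injective x) {y : ℝ} (hy : y ∉ Set.range x) :
    iteratedDeriv k (fun y => divDiff f (Fin.cons y x)) y =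
      simplexMoment (iteratedDeriv (k + (n + 1)) f) k (Fin.cons y x) := by
  induction k generalizing y with
  | zero =>
    rw [zero_add] at hf ⊢
    rw [iteratedDeriv_zero, divDiff_eq_hgDivDiff hf (Fin.cons_injective_iff.mpr ⟨hy, hx⟩),
      hgDivDiff_eq_simplexMoment_zero]
  | succ k ih =>
    have hk : k + (n + 1) < k + 1 + (n + 1) := by omega
    have hnear : iteratedDeriv k (fun y => divDiff f (Fin.cons y x)) =ᶠ[nhds y]
        fun y => simplexMoment (iteratedDeriv (k + (n + 1)) f) k (Fin.cons y x) :=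
      Filter.eventually_of_mem ((Set.finite_range x).isClosed.isOpen_compl.mem_nhds hy)
        fun z hz => ih (hf.of_le (by exact_mod_cast hk.le)) hz
    rw [iteratedDeriv_succ, hnear.deriv_eq, show k + 1 + (n + 1) = k + (n + 1) + 1 by omega]
    exact (hasDerivAt_simplexMoment_cons (hf.hasDerivAt_iteratedDeriv hk)
      (hf.continuous_iteratedDeriv _ (by exact_mod_cast hk)) k x y).deriv

theorem integral_pow_mul_integral_comp_add {h : ℝ → ℝ} (hh : Continuous h) (j : ℕ) (A : ℝ) :
    (j + 1 : ℝ) * ∫ u in (0 : ℝ)..A, u ^ j * ∫ v in (0 : ℝ)..A - u, h (u + v) =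
      ∫ u in (0 : ℝ)..A, u ^ (j + 1) * h u := by
  have hinner (u : ℝ) : ∫ v in (0 : ℝ)..A - u, h (u + v) =
      (∫ v in (0 : ℝ)..A, h v) - ∫ v in (0 : ℝ)..u, h v := by
    rw [intervalIntegral.integral_comp_add_left h u, add_zero, add_sub_cancel,
      intervalIntegral.integral_interval_sub_left (hh.intervalIntegrable _ _)
        (hh.intervalIntegrable _ _)]
  have hU (u : ℝ) : HasDerivAt (fun u => (∫ v in (0 : ℝ)..A, h v) - ∫ v in (0 : ℝ)..u, h v)
      (-h u) u :=
    (hh.integral_hasStrictDerivAt 0 u).hasDerivAt.const_sub _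
  have hV (u : ℝ) : HasDerivAt (fun u : ℝ => u ^ (j + 1) / ((j : ℝ) + 1)) (u ^ j) u := by
    refine ((hasDerivAt_pow (j + 1) u).div_const _).congr_deriv ?_
    rw [Nat.add_sub_cancel]
    push_cast
    field_simp
  simp_rw [hinner, mul_comm (_ ^ j)]
  rw [intervalIntegral.integral_mul_deriv_eq_deriv_mul (fun u _ => hU u) (fun u _ => hV u)
    (hh.neg.intervalIntegrable _ _) ((continuous_pow j).intervalIntegrable _ _)]
  simp only [sub_self, zero_mul, ne_eq, Nat.succ_ne_zero, not_false_eq_true, zero_pow, zero_div,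
    mul_zero, neg_mul, intervalIntegral.integral_neg, zero_sub, neg_neg,
    ← intervalIntegral.integral_const_mul]
  refine intervalIntegral.integral_congr fun u _ => ?_
  field_simp

theorem cons_self_comp_succAbove_one {α : Type*} {n : ℕ} (z : Fin (n + 1) → α) :
    (Fin.cons (z 0) z : Fin (n + 2) → α) ∘ (1 : Fin (n + 2)).succAbove = z := by
  funext i
  cases i using Fin.cases <;> simp

theorem simplexMoment_cons_self {F : ℝ → ℝ} (hF : Continuous F) (j : ℕ) {n : ℕ}
    (z : Fin (n + 2) → ℝ) :
    (j + 1 : ℝ) * simplexMoment F j (Fin.cons (z 0) z) = simplexMoment F (j + 1) z := by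
  set c := z 0 - z (Fin.last _)
  have hK : Continuous fun s : Fin (n + 1) → ℝ =>
      ∫ v in (0 : ℝ)..1 - ∑ i, s i, F (simplexPoint z s + v * c) :=
    intervalIntegral.continuous_parametric_intervalIntegral_of_continuous (by fun_prop)
      (by fun_prop)
  -- The integrand depends on `t 0` and `t 1` only through `t 0 ^ j` and `t 0 + t 1`: peel off
  -- these two coordinates, and what remains is a one-dimensional integration by parts.
  calc (j + 1 : ℝ) * simplexMoment F j (Fin.cons (z 0) z)
      = (j + 1) * ∫ s in cornerSimplex (n + 1),
          s 0 ^ j * ∫ v in (0 : ℝ)..1 - ∑ i, s i, F (simplexPoint z s + v * c) := by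
        rw [simplexMoment, setIntegral_cornerSimplex_succ 1 (by fun_prop)]
        congr 1
        refine setIntegral_congr_fun (measurableSet_cornerSimplex _) fun s _ => ?_
        rw [← intervalIntegral.integral_const_mul]
        refine intervalIntegral.integral_congr fun v _ => ?_
        simp [simplexPoint_insertNth, cons_self_comp_succAbove_one, Fin.insertNth_apply_below,
          ← Fin.succ_last, c]
    _ = ∫ r in cornerSimplex n, (j + 1) * ∫ u in (0 : ℝ)..1 - ∑ i, r i, u ^ j *
          ∫ v in (0 : ℝ)..1 - ∑ i, r i - u, F (simplexPoint (z ∘ Fin.succ) r + (u + v) * c) := by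
        rw [setIntegral_cornerSimplex_succ 0 (by fun_prop), ← integral_const_mul]
        refine setIntegral_congr_fun (measurableSet_cornerSimplex _) fun r _ => ?_
        simp only [simplexPoint_insertNth z 0]
        simp only [Fin.castSucc_zero, Fin.succAbove_zero, Fin.insertNth_zero', Fin.cons_zero,
          Fin.sum_cons]
        congr 1
        refine intervalIntegral.integral_congr fun u _ => ?_
        rw [show 1 - (u + ∑ i, r i) = 1 - ∑ i, r i - u by ring]
        congr 1
        refine intervalIntegral.integral_congr fun v _ => ?_
        simp only [add_mul, add_assoc, c]
    _ = ∫ r in cornerSimplex n, ∫ u in (0 : ℝ)..1 - ∑ i, r i,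
          u ^ (j + 1) * F (simplexPoint (z ∘ Fin.succ) r + u * c) := by
        congr 1 with r
        exact integral_pow_mul_integral_comp_add
          (h := fun σ => F (simplexPoint (z ∘ Fin.succ) r + σ * c)) (by fun_prop) j _
    _ = simplexMoment F (j + 1) z := by
        rw [simplexMoment, setIntegral_cornerSimplex_succ
          (g := fun t => t 0 ^ (j + 1) * F (simplexPoint z t)) 0 (by fun_prop)]
        simp only [simplexPoint_insertNth z 0]
        simp only [Fin.castSucc_zero, Fin.succAbove_zero, Fin.insertNth_zero', Fin.cons_zero, c]

theorem simplexMoment_comp_cast (F : ℝ → ℝ) (j : ℕ) {m n : ℕ} (h : m + 2 = n + 2)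
    (x : Fin (n + 2) → ℝ) : simplexMoment F j (x ∘ Fin.cast h) = simplexMoment F j x := by
  obtain rfl : m = n := by omega
  rfl

theorem factorial_mul_simplexMoment_append_const {F : ℝ → ℝ} (hF : Continuous F) (k : ℕ) :
    ∀ {n : ℕ} (x : Fin (n + 2) → ℝ),
      (k ! : ℝ) * simplexMoment F 0
        ((Fin.append (fun _ : Fin k => x 0) x : Fin (k + (n + 2)) → ℝ) : Fin (k + n + 2) → ℝ) =
        simplexMoment F k x := by
  induction k with
  | zero =>
    intro n x
    rw [Nat.factorial_zero, Nat.cast_one, one_mul, Fin.append_left_nil _ _ rfl,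
      simplexMoment_comp_cast]
  | succ k ih =>
    intro n x
    have hsnoc : (fun _ : Fin (k + 1) => x 0) = Fin.snoc (fun _ : Fin k => x 0) (x 0) := by
      funext i; cases i using Fin.lastCases <;> simp
    have hcons := ih (Fin.cons (x 0) x)
    rw [Fin.cons_zero] at hcons
    rw [hsnoc, Fin.append_left_snoc, simplexMoment_comp_cast, Nat.factorial_succ, Nat.cast_mul,
      mul_assoc, hcons, Nat.cast_add_one, simplexMoment_cons_self hF]

theorem measureReal_cornerSimplex (n : ℕ) : volume.real (cornerSimplex n) = (n ! : ℝ)⁻¹ := by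
  cases n with
  | zero => simp [measureReal_def, volume_cornerSimplex_zero]
  | succ k =>
    have hmoment (j : ℕ) {n : ℕ} (x : Fin (n + 2) → ℝ) :
        simplexMoment (fun _ => 1) j x = ∫ t in cornerSimplex (n + 1), t 0 ^ j := by
      simp only [simplexMoment, mul_one]
    have hone : ∫ t in cornerSimplex 1, t 0 ^ k = (k + 1 : ℝ)⁻¹ := by
      rw [setIntegral_cornerSimplex_succ 0 (by fun_prop)]
      simp [measureReal_def, volume_cornerSimplex_zero]
    have key : (k ! : ℝ) * ∫ t in cornerSimplex (k + 1), t 0 ^ 0 = (k + 1 : ℝ)⁻¹ := by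
      rw [← hone, ← hmoment, ← hmoment]
      exact factorial_mul_simplexMoment_append_const continuous_const k (0 : Fin 2 → ℝ)
    simp only [pow_zero, setIntegral_const, smul_eq_mul, mul_one] at key
    rw [Nat.factorial_succ, Nat.cast_mul, Nat.cast_add_one, mul_inv, ← key]
    field_simp

theorem simplexPoint_const {n : ℕ} (c : ℝ) (t : Fin n → ℝ) :
    simplexPoint (fun _ => c) t = c := by
  simp only [simplexPoint, ← sum_mul]
  ring

theorem hgDivDiff_const {n : ℕ} (f : ℝ → ℝ) (c : ℝ) :
    hgDivDiff f (fun _ : Fin (n + 1) => c) = iteratedDeriv n f c / n ! := by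
  simp only [hgDivDiff_eq_setIntegral, simplexPoint_const, setIntegral_const,
    measureReal_cornerSimplex, smul_eq_mul]
  ring

theorem iteratedDeriv_divDiff_eq_repeated (m k₁ : ℕ) (f : ℝ → ℝ)
    (hf : ContDiff ℝ (k₁ + m : ℕ) f) (a : Fin (m + 1) → ℝ) (ha : Function.Injective a) :
    iteratedDeriv k₁ (fun y => divDiff f (Function.update a 0 y)) (a 0)
      = (Nat.factorial k₁ : ℝ) *
          hgDivDiff f ((Fin.append (fun _ : Fin k₁ => a 0) a : Fin (k₁ + (m + 1)) → ℝ) : Fin (k₁ + m + 1) → ℝ) := by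
  cases m with
  | zero =>
    have hconst : (Fin.append (fun _ : Fin k₁ => a 0) a : Fin (k₁ + 1) → ℝ) = fun _ => a 0 := by
      funext i
      cases i using Fin.addCases <;> simp [Fin.append_left, Fin.append_right, Fin.fin_one_eq_zero]
    have hsingle : (fun y => divDiff f (Function.update a 0 y)) = f := by
      funext y
      simp [divDiff]
    rw [hsingle, hconst, hgDivDiff_const]
    exact (mul_div_cancel₀ _ (by positivity)).symm
  | succ m =>
    have hupdate (y : ℝ) : Function.update a 0 y = Fin.cons y (Fin.tail a) := by
      rw [← Fin.update_cons_zero (x := a 0), Fin.cons_self_tail]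
    have htail : a 0 ∉ Set.range (Fin.tail a) := fun ⟨i, hi⟩ => Fin.succ_ne_zero i (ha hi)
    simp only [hupdate]
    rw [iteratedDeriv_divDiff_cons (x := Fin.tail a) hf (ha.comp (Fin.succ_injective _)) htail,
      Fin.cons_self_tail, hgDivDiff_eq_simplexMoment_zero]
    exact (factorial_mul_simplexMoment_append_const
      (hf.continuous_iteratedDeriv _ le_rfl) k₁ a).symm
end

section
/- For pairwise distinct points a_1, ..., a_m, sufficiently smooth f, and nonnegative integers k_1, ..., k_m with k = k_1 + ... + k_m, the mixed partial derivative ∂^k/(∂a_1^{k_1} ... ∂a_m^{k_m}) of the Lagrange form ∑_{i=1}^m f(a_i) ∏_{q ≠ i} (a_i - a_q)^{-1} equals ∑_{i=1}^m k_i! ∑_{r_1+...+r_m = k_i, r_j ≥ 0} (f^{(r_i)}(a_i) (-1)^{k_i - r_i}/r_i!) ∏_{q ≠ i} ((k_q + r_q)! / ((a_i - a_q)^{k_q + r_q + 1} r_q!)). -/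
/-- `n`-th partial derivative in the `i`-th coordinate. -/
noncomputable def pderivN {m : ℕ} (i : Fin m) (n : ℕ) (F : (Fin m → ℝ) → ℝ) :
    (Fin m → ℝ) → ℝ :=
  fun a => iteratedDeriv n (fun y => F (Function.update a i y)) (a i)

/-- Mixed partial derivative `∂^{k 0}/∂a_0^{k 0} ⋯ ∂^{k (m-1)}/∂a_{m-1}^{k (m-1)}`. -/
noncomputable def mixedPartial {m : ℕ} (k : Fin m → ℕ) (F : (Fin m → ℝ) → ℝ) :
    (Fin m → ℝ) → ℝ :=
  (List.finRange m).foldr (fun i G => pderivN i (k i) G) F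

/-!
Let `divDiffPartial f κ b` be the right-hand side with the exponents `k` replaced by `κ`; for
`κ = 0` it is the Lagrange form itself. When `κ t = 0`, the variable `b t` enters it only through
the summand `i = t`, which is `f (b t) * ∏_{q ≠ t} κ_q! / (b t - b q)^(κ_q + 1)`, and through the
single factor `(b i - b t)^(-(r t + 1))` of each summand `i ≠ t`. Differentiating `n` times in
`b t` (the general Leibniz rule for the first, the power rule for the second) yields exactly
`divDiffPartial` with `κ t` replaced by `n`. Doing this once per coordinate, on the open set of
injective tuples where everything is smooth, gives the theorem.
-/

open Finset Function Nat

theorem Finset.Nat.sum_antidiagonalTuple_succ {β : Type*} [AddCommMonoid β] (M n : ℕ)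
    (h : (Fin (M + 1) → ℕ) → β) :
    ∑ r ∈ antidiagonalTuple (M + 1) n, h r
      = ∑ p ∈ antidiagonal n, ∑ r ∈ antidiagonalTuple M p.2, h (Fin.cons p.1 r) := by
  have hval : (antidiagonalTuple (M + 1) n).val
      = (antidiagonal n).val.bind fun p => (antidiagonalTuple M p.2).val.map (Fin.cons p.1) := by
    simp only [antidiagonalTuple, Multiset.Nat.antidiagonalTuple, List.Nat.antidiagonalTuple,
      Multiset.map_coe]
    exact (Multiset.coe_bind _ _).symm
  simp only [Finset.sum, hval, Multiset.map_bind, Multiset.sum_bind, Multiset.map_map, comp_def]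

theorem Finset.prod_apply_update_of_mem {ι α M : Type*} [CommMonoid M] [DecidableEq ι]
    {s : Finset ι} {t : ι} (ht : t ∈ s) (F : ι → α → M) (b : ι → α) (y : α) :
    ∏ q ∈ s, F q (update b t y q) = F t y * ∏ q ∈ s.erase t, F q (b q) := by
  rw [← mul_prod_erase s _ ht, update_self]
  exact congrArg _ (prod_congr rfl fun q hq => by rw [update_of_ne (ne_of_mem_erase hq)])

theorem isOpen_setOf_injective {ι X : Type*} [Finite ι] [TopologicalSpace X] [T2Space X] :
    IsOpen {b : ι → X | Injective b} := by
  have : {b : ι → X | Injective b} = ⋂ i, ⋂ j, {b | b i = b j → i = j} := by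
    ext b; simp [Injective]
  rw [this]
  refine isOpen_iInter_of_finite fun i => isOpen_iInter_of_finite fun j => ?_
  rcases eq_or_ne i j with rfl | hij
  · simp
  · simpa [hij] using isOpen_ne_fun (continuous_apply i) (continuous_apply j)

section

variable {𝕜 : Type*} [NontriviallyNormedField 𝕜]

theorem deriv_factorial_div_pow (p : ℕ) :
    deriv (fun y : 𝕜 => (p ! : 𝕜) / y ^ (p + 1))
      = fun y => -(((p + 1)! : 𝕜) / y ^ (p + 1 + 1)) := by
  have h (q : ℕ) (y : 𝕜) : (q ! : 𝕜) / y ^ (q + 1) = q ! * y ^ (-(q + 1 : ℤ)) := by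
    rw [zpow_neg, div_eq_mul_inv]; norm_cast
  simp only [h, deriv_const_mul_field', deriv_zpow']
  ext y
  push_cast [factorial_succ]
  ring_nf

theorem iteratedDeriv_factorial_div_pow (p n : ℕ) :
    iteratedDeriv n (fun y : 𝕜 => (p ! : 𝕜) / y ^ (p + 1))
      = fun y => (-1) ^ n * (((p + n)! : 𝕜) / y ^ (p + n + 1)) := by
  induction n generalizing p with
  | zero => simp
  | succ n ih =>
    ext y
    rw [iteratedDeriv_succ', deriv_factorial_div_pow, iteratedDeriv_fun_neg, ih,
      show p + 1 + n = p + (n + 1) by ring]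
    ring

theorem iteratedDeriv_factorial_div_sub_pow (p n : ℕ) (c x : 𝕜) :
    iteratedDeriv n (fun y => (p ! : 𝕜) / (y - c) ^ (p + 1)) x
      = (-1) ^ n * (((p + n)! : 𝕜) / (x - c) ^ (p + n + 1)) := by
  rw [iteratedDeriv_comp_sub_const n (fun y : 𝕜 => (p ! : 𝕜) / y ^ (p + 1)),
    iteratedDeriv_factorial_div_pow]

theorem iteratedDeriv_factorial_div_const_sub_pow (p n : ℕ) (c x : 𝕜) :
    iteratedDeriv n (fun y => (p ! : 𝕜) / (c - y) ^ (p + 1)) x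
      = ((p + n)! : 𝕜) / (c - x) ^ (p + n + 1) := by
  rw [iteratedDeriv_comp_const_sub n (fun y : 𝕜 => (p ! : 𝕜) / y ^ (p + 1)),
    iteratedDeriv_factorial_div_pow]
  simp only [smul_eq_mul, ← mul_assoc, ← mul_pow, neg_one_mul, neg_neg, one_pow, one_mul]

theorem iteratedDeriv_fun_prod_fin [CharZero 𝕜] {M n : ℕ}
    {g : Fin M → 𝕜 → 𝕜} {x : 𝕜} (hg : ∀ q, ContDiffAt 𝕜 n (g q) x) :
    iteratedDeriv n (fun y => ∏ q, g q y) x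
      = n ! * ∑ r ∈ Finset.Nat.antidiagonalTuple M n,
          ∏ q, iteratedDeriv (r q) (g q) x / (r q)! := by
  induction M generalizing n with
  | zero => cases n <;> simp [iteratedDeriv_const]
  | succ M ih =>
    simp only [Fin.prod_univ_succ]
    rw [iteratedDeriv_fun_mul (hg 0) (contDiffAt_prod fun q _ => hg q.succ),
      Finset.Nat.sum_antidiagonalTuple_succ, ← Finset.Nat.sum_antidiagonal_eq_sum_range_succ
        (fun i j => (n.choose i : 𝕜) * iteratedDeriv i (g 0) x *
          iteratedDeriv j (fun y => ∏ q : Fin M, g q.succ y) x),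
      mul_sum]
    refine sum_congr rfl fun p hp => ?_
    rw [HasAntidiagonal.mem_antidiagonal] at hp
    rw [ih fun q => (hg q.succ).of_le (by exact_mod_cast (by omega : p.2 ≤ n))]
    simp only [mul_sum]
    refine sum_congr rfl fun r _ => ?_
    simp only [Fin.cons_zero, Fin.cons_succ]
    have hchoose : (n.choose p.1 : 𝕜) * p.1 ! * p.2 ! = n ! := by
      rw [show p.2 = n - p.1 by omega]
      exact_mod_cast congrArg (Nat.cast (R := 𝕜))
        (Nat.choose_mul_factorial_mul_factorial (by omega : p.1 ≤ n))
    have : (p.1 ! : 𝕜) ≠ 0 := Nat.cast_ne_zero.2 (factorial_ne_zero _)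
    rw [← hchoose]
    field_simp

end

-- `lagrangeFactor p s (c - y)` is `1 / s!` times the `(p + s)`-th derivative of `y ↦ 1 / (c - y)`.
noncomputable def lagrangeFactor (p s : ℕ) (x : ℝ) : ℝ :=
  ((p + s)! : ℝ) / (x ^ (p + s + 1) * s !)

theorem contDiffAt_lagrangeFactor_comp {p s n : ℕ} {g : ℝ → ℝ} {x : ℝ} (hg : ContDiffAt ℝ n g x)
    (hx : g x ≠ 0) :
    ContDiffAt ℝ n (fun y => lagrangeFactor p s (g y)) x := by
  unfold lagrangeFactor
  fun_prop (disch := exact mul_ne_zero (pow_ne_zero _ hx) (cast_ne_zero.2 (factorial_ne_zero s)))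

theorem iteratedDeriv_lagrangeFactor_const_sub (p s n : ℕ) (c x : ℝ) :
    iteratedDeriv n (fun y => lagrangeFactor p s (c - y)) x = lagrangeFactor (p + n) s (c - x) := by
  simp only [lagrangeFactor, ← div_div, iteratedDeriv_div_const,
    iteratedDeriv_factorial_div_const_sub_pow, add_right_comm p n s]

theorem iteratedDeriv_lagrangeFactor_sub_div_factorial (p s : ℕ) (c x : ℝ) :
    iteratedDeriv s (fun y => lagrangeFactor p 0 (y - c)) x / s !
      = (-1) ^ s * lagrangeFactor p s (x - c) := by
  simp only [lagrangeFactor, ← div_div, add_zero, factorial_zero, cast_one, div_one,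
    iteratedDeriv_factorial_div_sub_pow]
  ring

section

variable {m : ℕ}

noncomputable def divDiffPartialTerm (f : ℝ → ℝ) (κ : Fin m → ℕ) (b : Fin m → ℝ) (i : Fin m) : ℝ :=
  (κ i)! * ∑ r ∈ Finset.Nat.antidiagonalTuple m (κ i),
    (iteratedDeriv (r i) f (b i) * (-1 : ℝ) ^ (κ i - r i) / (r i)!) *
      ∏ q ∈ univ.erase i, lagrangeFactor (κ q) (r q) (b i - b q)

noncomputable def divDiffPartial (f : ℝ → ℝ) (κ : Fin m → ℕ) (b : Fin m → ℝ) : ℝ :=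
  ∑ i, divDiffPartialTerm f κ b i

theorem divDiffPartialTerm_update_self (f : ℝ → ℝ) {κ : Fin m → ℕ} {t : Fin m} (hκ : κ t = 0)
    (b : Fin m → ℝ) (y : ℝ) :
    divDiffPartialTerm f κ (update b t y) t
      = f y * ∏ q ∈ univ.erase t, lagrangeFactor (κ q) 0 (y - b q) := by
  simp only [divDiffPartialTerm, hκ, Finset.Nat.antidiagonalTuple_zero_right, sum_singleton,
    Pi.zero_apply, iteratedDeriv_zero, update_self, factorial_zero, cast_one, Nat.sub_self,
    pow_zero, mul_one, div_one, one_mul]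
  exact congrArg _ (prod_congr rfl fun q hq => by rw [update_of_ne (ne_of_mem_erase hq)])

theorem divDiffPartialTerm_update_of_ne (f : ℝ → ℝ) (κ : Fin m → ℕ) {t i : Fin m} (hi : i ≠ t)
    (b : Fin m → ℝ) (y : ℝ) :
    divDiffPartialTerm f κ (update b t y) i
      = (κ i)! * ∑ r ∈ Finset.Nat.antidiagonalTuple m (κ i),
          (iteratedDeriv (r i) f (b i) * (-1 : ℝ) ^ (κ i - r i) / (r i)!) *
            (lagrangeFactor (κ t) (r t) (b i - y) *
              ∏ q ∈ (univ.erase i).erase t, lagrangeFactor (κ q) (r q) (b i - b q)) := by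
  have ht : t ∈ univ.erase i := mem_erase.2 ⟨hi.symm, mem_univ t⟩
  simp only [divDiffPartialTerm, update_of_ne hi]
  refine congrArg _ (sum_congr rfl fun r _ => ?_)
  rw [prod_apply_update_of_mem ht fun q x => lagrangeFactor (κ q) (r q) (b i - x)]

theorem contDiffAt_divDiffPartialTerm_update {f : ℝ → ℝ} {κ : Fin m → ℕ} {t : Fin m}
    (hκ : κ t = 0) {b : Fin m → ℝ} (hb : Injective b) {n : ℕ} (hf : ContDiffAt ℝ n f (b t))
    (i : Fin m) :
    ContDiffAt ℝ n (fun y => divDiffPartialTerm f κ (update b t y) i) (b t) := by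
  rcases eq_or_ne i t with rfl | hi
  · simp only [divDiffPartialTerm_update_self f hκ]
    exact hf.mul (contDiffAt_prod fun q hq => contDiffAt_lagrangeFactor_comp (by fun_prop)
      (sub_ne_zero.2 (hb.ne (ne_of_mem_erase hq).symm)))
  · simp only [divDiffPartialTerm_update_of_ne f κ hi]
    exact contDiffAt_const.mul (ContDiffAt.sum fun r _ => contDiffAt_const.mul
      ((contDiffAt_lagrangeFactor_comp (by fun_prop) (sub_ne_zero.2 (hb.ne hi))).mul
        contDiffAt_const))

theorem iteratedDeriv_divDiffPartialTerm_update_self {f : ℝ → ℝ} {κ : Fin m → ℕ} {t : Fin m}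
    (hκ : κ t = 0) {b : Fin m → ℝ} (hb : Injective b) {n : ℕ} (hf : ContDiffAt ℝ n f (b t)) :
    iteratedDeriv n (fun y => divDiffPartialTerm f κ (update b t y) t) (b t)
      = divDiffPartialTerm f (update κ t n) b t := by
  set G : Fin m → ℝ → ℝ := fun q y => lagrangeFactor (κ q) 0 (y - b q)
  have hprod : (fun y => divDiffPartialTerm f κ (update b t y) t)
      = fun y => ∏ q, update G t f q y := by
    ext y
    rw [divDiffPartialTerm_update_self f hκ]
    exact (prod_apply_update_of_mem (mem_univ t) (fun q (h : ℝ → ℝ) => h y) G f).symm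
  have hG (q : Fin m) : ContDiffAt ℝ n (update G t f q) (b t) := by
    rcases eq_or_ne q t with rfl | hq
    · rwa [update_self]
    · rw [update_of_ne hq]
      exact contDiffAt_lagrangeFactor_comp (g := fun y => y - b q) (by fun_prop)
        (sub_ne_zero.2 (hb.ne hq.symm))
  rw [hprod, iteratedDeriv_fun_prod_fin hG]
  simp only [divDiffPartialTerm, update_self]
  refine congrArg _ (sum_congr rfl fun r hr => ?_)
  have hsign : ∏ q ∈ univ.erase t, (-1 : ℝ) ^ r q = (-1) ^ (n - r t) := by
    rw [Finset.Nat.mem_antidiagonalTuple] at hr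
    rw [prod_pow_eq_pow_sum]
    have := add_sum_erase univ r (mem_univ t)
    congr 1
    omega
  have hfactor : ∀ q ∈ univ.erase t, iteratedDeriv (r q) (G q) (b t) / (r q)!
      = (-1) ^ r q * lagrangeFactor (update κ t n q) (r q) (b t - b q) := fun q hq => by
    rw [update_of_ne (ne_of_mem_erase hq)]
    exact iteratedDeriv_lagrangeFactor_sub_div_factorial _ _ _ _
  rw [prod_apply_update_of_mem (mem_univ t)
      (fun q (h : ℝ → ℝ) => iteratedDeriv (r q) h (b t) / (r q)!),
    prod_congr rfl hfactor, prod_mul_distrib, hsign]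
  ring

theorem iteratedDeriv_divDiffPartialTerm_update_of_ne (f : ℝ → ℝ) (κ : Fin m → ℕ) {t i : Fin m}
    (hi : i ≠ t) {b : Fin m → ℝ} (hb : b i ≠ b t) (n : ℕ) :
    iteratedDeriv n (fun y => divDiffPartialTerm f κ (update b t y) i) (b t)
      = divDiffPartialTerm f (update κ t (κ t + n)) b i := by
  simp only [divDiffPartialTerm_update_of_ne f κ hi]
  rw [iteratedDeriv_const_mul_field, iteratedDeriv_fun_sum fun r _ => contDiffAt_const.mul
    ((contDiffAt_lagrangeFactor_comp (g := fun y => b i - y) (by fun_prop)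
      (sub_ne_zero.2 hb)).mul contDiffAt_const)]
  simp only [iteratedDeriv_const_mul_field, iteratedDeriv_mul_const_field,
    iteratedDeriv_lagrangeFactor_const_sub, divDiffPartialTerm, update_of_ne hi]
  have ht : t ∈ univ.erase i := mem_erase.2 ⟨hi.symm, mem_univ t⟩
  refine congrArg _ (sum_congr rfl fun r _ => ?_)
  rw [prod_apply_update_of_mem ht fun q p => lagrangeFactor p (r q) (b i - b q)]

theorem iteratedDeriv_divDiffPartial_update {f : ℝ → ℝ} {κ : Fin m → ℕ} {t : Fin m}
    (hκ : κ t = 0) {b : Fin m → ℝ} (hb : Injective b) {n : ℕ} (hf : ContDiffAt ℝ n f (b t)) :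
    iteratedDeriv n (fun y => divDiffPartial f κ (update b t y)) (b t)
      = divDiffPartial f (update κ t n) b := by
  simp only [divDiffPartial]
  rw [iteratedDeriv_fun_sum fun i _ => contDiffAt_divDiffPartialTerm_update hκ hb hf i]
  refine sum_congr rfl fun i _ => ?_
  rcases eq_or_ne i t with rfl | hi
  · exact iteratedDeriv_divDiffPartialTerm_update_self hκ hb hf
  · rw [iteratedDeriv_divDiffPartialTerm_update_of_ne f κ hi (hb.ne hi), hκ, zero_add]

theorem pderivN_congr {F G : (Fin m → ℝ) → ℝ} {s : Set (Fin m → ℝ)} (hs : IsOpen s)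
    (hFG : Set.EqOn F G s) {b : Fin m → ℝ} (hb : b ∈ s) (i : Fin m) (n : ℕ) :
    pderivN i n F b = pderivN i n G b := by
  refine Filter.EventuallyEq.iteratedDeriv_eq n ?_
  have hcont : Continuous fun y => update b i y := continuous_const.update i continuous_id
  have : update b i (b i) ∈ s := by rwa [update_eq_self]
  filter_upwards [hcont.continuousAt.preimage_mem_nhds (hs.mem_nhds this)] with y hy
  exact hFG hy

theorem foldr_pderivN_divDiffPartial {f : ℝ → ℝ} {k : Fin m → ℕ} (hf : ∀ q, ContDiff ℝ (k q) f)
    {l : List (Fin m)} (hl : l.Nodup) {b : Fin m → ℝ} (hb : Injective b) :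
    l.foldr (fun i G => pderivN i (k i) G) (divDiffPartial f 0) b
      = divDiffPartial f (fun q => if q ∈ l then k q else 0) b := by
  induction l generalizing b with
  | nil => simp only [List.foldr_nil, List.not_mem_nil, if_false]; rfl
  | cons t l ih =>
    rw [List.nodup_cons] at hl
    rw [List.foldr_cons, pderivN_congr isOpen_setOf_injective (fun b' hb' => ih hl.2 hb') hb]
    refine (iteratedDeriv_divDiffPartial_update (by simp [hl.1]) hb (hf t).contDiffAt).trans ?_
    congr 1
    ext q
    rcases eq_or_ne q t with rfl | hq
    · simp
    · simp [hq]

end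

theorem mixedPartial_lagrange_form_general (m : ℕ) (f : ℝ → ℝ) (k : Fin m → ℕ)
    (hf : ContDiff ℝ (Finset.univ.sup k : ℕ) f) (a : Fin m → ℝ)
    (ha : Function.Injective a) :
    mixedPartial k (fun b => ∑ i, f (b i) * ∏ q ∈ Finset.univ.erase i, (b i - b q)⁻¹) a
      = ∑ i, (Nat.factorial (k i) : ℝ) *
          ∑ r ∈ Finset.Nat.antidiagonalTuple m (k i),
            (iteratedDeriv (r i) f (a i) * (-1 : ℝ) ^ (k i - r i) / (Nat.factorial (r i) : ℝ)) *
              ∏ q ∈ Finset.univ.erase i,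
                ((Nat.factorial (k q + r q) : ℝ) /
                  ((a i - a q) ^ (k q + r q + 1) * (Nat.factorial (r q) : ℝ))) := by
  have hbase : (fun b : Fin m → ℝ => ∑ i, f (b i) * ∏ q ∈ univ.erase i, (b i - b q)⁻¹)
      = divDiffPartial f 0 := by
    ext b
    simp [divDiffPartial, divDiffPartialTerm, lagrangeFactor,
      Finset.Nat.antidiagonalTuple_zero_right]
  have hk : (fun q => if q ∈ List.finRange m then k q else 0) = k := by
    simp [List.mem_finRange]
  rw [mixedPartial, hbase, foldr_pderivN_divDiffPartial
    (fun q => hf.of_le (by exact_mod_cast le_sup (mem_univ q))) (List.nodup_finRange m) ha, hk]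
  rfl

theorem mixedPartial_lagrange_form (m : ℕ) (hm : 1 ≤ m) (f : ℝ → ℝ) (k : Fin m → ℕ)
    (hf : ContDiff ℝ (Finset.univ.sup k : ℕ) f) (a : Fin m → ℝ)
    (ha : Function.Injective a) :
    mixedPartial k (fun b => ∑ i, f (b i) * ∏ q ∈ Finset.univ.erase i, (b i - b q)⁻¹) a
      = ∑ i, (Nat.factorial (k i) : ℝ) *
          ∑ r ∈ Finset.Nat.antidiagonalTuple m (k i),
            (iteratedDeriv (r i) f (a i) * (-1 : ℝ) ^ (k i - r i) / (Nat.factorial (r i) : ℝ)) *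
              ∏ q ∈ Finset.univ.erase i,
                ((Nat.factorial (k q + r q) : ℝ) /
                  ((a i - a q) ^ (k q + r q + 1) * (Nat.factorial (r q) : ℝ))) :=
  mixedPartial_lagrange_form_general m f k hf a ha
end

section
/- For any positive integer n and real z > 0, the n-th derivative of z ↦ γ(1,z)/z = (1 - e^{-z})/z equals (-1)^n γ(n+1, z)/z^{n+1}, where γ is the lower incomplete gamma function. -/
open Nat

/-- The lower incomplete gamma function `γ(a, z) = ∫_0^z t^(a-1) e^(-t) dt`. -/
noncomputable def lowerGamma (a z : ℝ) : ℝ := ∫ t in (0:ℝ)..z, t ^ (a - 1) * Real.exp (-t)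

/-!
For natural `n`, `γ(n+1, w) = n! (1 - e^{-w} S_n(w))` with `S_n` the `n`-th Taylor polynomial of
`exp`, since the derivative of `-e^{-w} S_n(w)` is `e^{-w} w^n / n!`. Differentiating this closed
form gives `d/dw [γ(n+1, w) / w^(n+1)] = -γ(n+2, w) / w^(n+2)`, and induction from
`γ(1, w) = 1 - e^{-w}` does the rest.
-/

noncomputable def expPartialSum (n : ℕ) (w : ℝ) : ℝ := ∑ r ∈ Finset.range (n + 1), w ^ r / r !

lemma expPartialSum_zero (w : ℝ) : expPartialSum 0 w = 1 := by
  simp [expPartialSum]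

lemma expPartialSum_succ (n : ℕ) (w : ℝ) :
    expPartialSum (n + 1) w = expPartialSum n w + w ^ (n + 1) / (n + 1)! :=
  Finset.sum_range_succ _ _

lemma expPartialSum_at_zero (n : ℕ) : expPartialSum n 0 = 1 := by
  simp [expPartialSum, Finset.sum_range_succ']

lemma hasDerivAt_expPartialSum (n : ℕ) (w : ℝ) :
    HasDerivAt (expPartialSum n) (expPartialSum n w - w ^ n / n !) w := by
  induction n with
  | zero =>
    rw [show expPartialSum 0 = fun _ => 1 from funext expPartialSum_zero]
    simpa using hasDerivAt_const w (1 : ℝ)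
  | succ n ih =>
    have hterm : HasDerivAt (fun w : ℝ => w ^ (n + 1) / (n + 1)!) (w ^ n / n !) w := by
      refine ((hasDerivAt_pow (n + 1) w).div_const ((n + 1)! : ℝ)).congr_deriv ?_
      rw [Nat.factorial_succ]
      push_cast
      field_simp
    rw [show expPartialSum (n + 1) = _ from funext (expPartialSum_succ n)]
    refine (ih.add hterm).congr_deriv ?_
    beta_reduce
    ring

lemma hasDerivAt_exp_neg_mul_expPartialSum (n : ℕ) (w : ℝ) :
    HasDerivAt (fun w => Real.exp (-w) * expPartialSum n w)
      (-(Real.exp (-w) * w ^ n / n !)) w :=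
  ((hasDerivAt_neg w).exp.mul (hasDerivAt_expPartialSum n w)).congr_deriv (by ring)

lemma lowerGamma_natCast_add_one (n : ℕ) (z : ℝ) :
    lowerGamma ((n : ℝ) + 1) z = n ! * (1 - Real.exp (-z) * expPartialSum n z) := by
  have hintegrand : ∀ t : ℝ, t ^ ((n : ℝ) + 1 - 1) * Real.exp (-t) = t ^ n * Real.exp (-t) := by
    intro t
    rw [add_sub_cancel_right, Real.rpow_natCast]
  have hprimitive : ∀ t : ℝ, HasDerivAt (fun w => -(n ! * (Real.exp (-w) * expPartialSum n w)))
      (t ^ n * Real.exp (-t)) t := by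
    intro t
    refine ((hasDerivAt_exp_neg_mul_expPartialSum n t).const_mul (n ! : ℝ)).neg.congr_deriv ?_
    field_simp
  rw [lowerGamma, intervalIntegral.integral_congr (fun t _ => hintegrand t),
    intervalIntegral.integral_eq_sub_of_hasDerivAt (fun t _ => hprimitive t)
      ((by fun_prop : Continuous fun t : ℝ => t ^ n * Real.exp (-t)).intervalIntegrable _ _),
    expPartialSum_at_zero]
  simp only [neg_zero, Real.exp_zero]
  ring

lemma lowerGamma_one (z : ℝ) : lowerGamma 1 z = 1 - Real.exp (-z) := by
  simpa [expPartialSum_zero] using lowerGamma_natCast_add_one 0 z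

lemma hasDerivAt_lowerGamma_div_pow (n : ℕ) {z : ℝ} (hz : z ≠ 0) :
    HasDerivAt (fun w => lowerGamma ((n : ℝ) + 1) w / w ^ (n + 1))
      (-(lowerGamma (((n + 1 : ℕ) : ℝ) + 1) z / z ^ (n + 2))) z := by
  simp only [lowerGamma_natCast_add_one]
  have hnum : HasDerivAt (fun w => (n ! : ℝ) * (1 - Real.exp (-w) * expPartialSum n w))
      (n ! * (Real.exp (-z) * z ^ n / n !)) z :=
    (((hasDerivAt_const z (1 : ℝ)).sub
      (hasDerivAt_exp_neg_mul_expPartialSum n z)).const_mul (n ! : ℝ)).congr_deriv (by ring)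
  refine (hnum.div (hasDerivAt_pow (n + 1) z) (pow_ne_zero _ hz)).congr_deriv ?_
  rw [expPartialSum_succ, Nat.factorial_succ]
  push_cast
  field_simp
  ring

lemma iteratedDeriv_one_sub_exp_neg_div (n : ℕ) :
    Set.EqOn (iteratedDeriv n (fun w => (1 - Real.exp (-w)) / w))
      (fun w => (-1 : ℝ) ^ n * lowerGamma ((n : ℝ) + 1) w / w ^ (n + 1)) (Set.Ioi 0) := by
  induction n with
  | zero =>
    intro w _
    simp [lowerGamma_one]
  | succ n ih =>
    intro z hz
    have hlocal := Filter.eventuallyEq_of_mem (isOpen_Ioi.mem_nhds hz) ih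
    rw [iteratedDeriv_succ, hlocal.deriv_eq]
    simp only [mul_div_assoc]
    rw [((hasDerivAt_lowerGamma_div_pow n (ne_of_gt hz)).const_mul _).deriv]
    ring

theorem iteratedDeriv_lowerGamma_one_general (n : ℕ) (z : ℝ) (hz : 0 < z) :
    iteratedDeriv n (fun w => (1 - Real.exp (-w)) / w) z
      = (-1 : ℝ) ^ n * lowerGamma ((n : ℝ) + 1) z / z ^ (n + 1) :=
  iteratedDeriv_one_sub_exp_neg_div n hz

theorem iteratedDeriv_lowerGamma_one (n : ℕ) (hn : 1 ≤ n) (z : ℝ) (hz : 0 < z) :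
    iteratedDeriv n (fun w => (1 - Real.exp (-w)) / w) z
      = (-1 : ℝ) ^ n * lowerGamma ((n : ℝ) + 1) z / z ^ (n + 1) :=
  iteratedDeriv_lowerGamma_one_general n z hz
end

section
/- For 0 < ν < 1, c ≥ 1, and x < 0, the Liouville fractional integral of f(t) = (1 - e^t)/t (i.e., the lower incomplete gamma kernel) satisfies (1/Γ(ν)) ∫_{-∞}^x (x - τ)^{ν-1} (1 - e^τ)/τ dτ = -(-x)^{ν-1} γ(1-ν, -x), where γ is the lower incomplete gamma function. -/
open MeasureTheory Set Real

theorem setIntegral_Iio_eq_setIntegral_Ioi_sub {E : Type*} [NormedAddCommGroup E]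
    [NormedSpace ℝ E] (x : ℝ) (g : ℝ → E) :
    ∫ τ in Iio x, g τ = ∫ t in Ioi 0, g (x - t) := by
  have hpre : (fun t : ℝ => x - t) ⁻¹' Iio x = Ioi 0 := by ext t; simp
  rw [← (volume.measurePreserving_sub_left x).setIntegral_preimage_emb
    (Homeomorph.subLeft x).measurableEmbedding g (Iio x), hpre]

theorem integral_Iio_sub_rpow_mul_exp_mul {ν u : ℝ} (hν : 0 < ν) (hu : 0 < u) (x : ℝ) :
    ∫ τ in Iio x, (x - τ) ^ (ν - 1) * exp (u * τ) = Gamma ν * u ^ (-ν) * exp (u * x) := by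
  have hsplit (t : ℝ) : (x - (x - t)) ^ (ν - 1) * exp (u * (x - t))
      = t ^ (ν - 1) * exp (-(u * t)) * exp (u * x) := by
    rw [sub_sub_cancel, mul_assoc, ← exp_add]; ring_nf
  simp_rw [setIntegral_Iio_eq_setIntegral_Ioi_sub x, hsplit, integral_mul_const,
    integral_rpow_mul_exp_neg_mul_Ioi hν hu, one_div, inv_rpow hu.le, ← rpow_neg hu.le]
  ring

theorem integrableOn_Iio_sub_rpow_mul_exp_mul {ν u : ℝ} (hν : 0 < ν) (hu : 0 < u) (x : ℝ) :
    IntegrableOn (fun τ => (x - τ) ^ (ν - 1) * exp (u * τ)) (Iio x) :=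
  -- a non-integrable function has Bochner integral `0`
  .of_integral_ne_zero <| by
    rw [integral_Iio_sub_rpow_mul_exp_mul hν hu]
    have := Gamma_pos_of_pos hν
    positivity

theorem integral_Ioc_exp_mul {τ : ℝ} (hτ : τ ≠ 0) :
    ∫ u in Ioc 0 1, exp (u * τ) = (exp τ - 1) / τ := by
  rw [← intervalIntegral.integral_of_le zero_le_one,
    intervalIntegral.integral_comp_mul_right (fun v => exp v) hτ]
  simp only [zero_mul, one_mul, integral_exp, exp_zero, smul_eq_mul]
  field_simp

theorem lowerGamma_eq_rpow_mul_integral {y : ℝ} (hy : 0 < y) (a : ℝ) :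
    lowerGamma a y = y ^ a * ∫ u in (0:ℝ)..1, u ^ (a - 1) * exp (-(y * u)) := by
  have hscale := intervalIntegral.smul_integral_comp_mul_left (a := 0) (b := 1)
    (f := fun t : ℝ => t ^ (a - 1) * exp (-t)) y
  simp only [mul_zero, mul_one, smul_eq_mul] at hscale
  rw [lowerGamma, ← hscale]
  simp_rw [← intervalIntegral.integral_const_mul]
  refine intervalIntegral.integral_congr fun u hu => ?_
  rw [uIcc_of_le zero_le_one] at hu
  simp only [mul_rpow hy.le hu.1, rpow_sub_one hy.ne']
  field_simp

theorem integrableOn_Ioc_rpow_neg_mul_exp_mul {ν : ℝ} (hν : ν < 1) (x : ℝ) :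
    IntegrableOn (fun u => u ^ (-ν) * exp (u * x)) (Ioc 0 1) := by
  have hrpow : IntegrableOn (fun u : ℝ => u ^ (-ν)) (Icc 0 1) := by
    rw [← intervalIntegrable_iff_integrableOn_Icc_of_le zero_le_one]
    exact intervalIntegral.intervalIntegrable_rpow' (by linarith)
  exact (hrpow.mul_continuousOn (by fun_prop) isCompact_Icc).mono_set Ioc_subset_Icc_self

theorem integral_Iio_integral_Ioc_sub_rpow_mul_exp_mul_swap {ν : ℝ} (hν₀ : 0 < ν) (hν₁ : ν < 1)
    (x : ℝ) :
    ∫ τ in Iio x, ∫ u in Ioc 0 1, (x - τ) ^ (ν - 1) * exp (u * τ)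
      = ∫ u in Ioc 0 1, ∫ τ in Iio x, (x - τ) ^ (ν - 1) * exp (u * τ) := by
  apply integral_integral_swap
  have hmeas : AEStronglyMeasurable (Function.uncurry fun τ u => (x - τ) ^ (ν - 1) * exp (u * τ))
      ((volume.restrict (Iio x)).prod (volume.restrict (Ioc 0 1))) := by
    apply Measurable.aestronglyMeasurable
    fun_prop
  refine (integrable_prod_iff' hmeas).2 ⟨?_, ?_⟩
  · exact (ae_restrict_iff' measurableSet_Ioc).2 <| .of_forall fun u hu =>
      integrableOn_Iio_sub_rpow_mul_exp_mul hν₀ hu.1 x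
  · refine IntegrableOn.congr_fun ((integrableOn_Ioc_rpow_neg_mul_exp_mul hν₁ x).const_mul
      (Gamma ν)) (fun u hu => ?_) measurableSet_Ioc
    rw [← mul_assoc, ← integral_Iio_sub_rpow_mul_exp_mul hν₀ hu.1]
    refine setIntegral_congr_fun measurableSet_Iio fun τ hτ => ?_
    have : 0 < x - τ := sub_pos.2 hτ
    simp only [Function.uncurry_apply_pair, Real.norm_eq_abs]
    exact (abs_of_nonneg (by positivity)).symm

theorem liouville_fractional_integral_gamma_kernel (ν x : ℝ)
    (hν₀ : 0 < ν) (hν₁ : ν < 1) (hx : x < 0) :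
    (1 / Real.Gamma ν) *
        ∫ τ in Set.Iio x, (x - τ) ^ (ν - 1) * ((1 - Real.exp τ) / τ)
      = -((-x) ^ (ν - 1)) * lowerGamma (1 - ν) (-x) := by
  have hΓ : Gamma ν ≠ 0 := (Gamma_pos_of_pos hν₀).ne'
  have hkernel : ∀ τ ∈ Iio x, (x - τ) ^ (ν - 1) * ((1 - exp τ) / τ)
      = -∫ u in Ioc 0 1, (x - τ) ^ (ν - 1) * exp (u * τ) := fun τ hτ => by
    rw [integral_const_mul, integral_Ioc_exp_mul (hτ.out.trans hx).ne]
    ring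
  have hlowerGamma :
      lowerGamma (1 - ν) (-x) = (-x) ^ (1 - ν) * ∫ u in Ioc 0 1, u ^ (-ν) * exp (u * x) := by
    rw [lowerGamma_eq_rpow_mul_integral (neg_pos.2 hx),
      intervalIntegral.integral_of_le zero_le_one]
    simp only [sub_sub_cancel_left, neg_mul, neg_neg, mul_comm x]
  calc (1 / Gamma ν) * ∫ τ in Iio x, (x - τ) ^ (ν - 1) * ((1 - exp τ) / τ)
      = (1 / Gamma ν) * -∫ u in Ioc 0 1, ∫ τ in Iio x, (x - τ) ^ (ν - 1) * exp (u * τ) := by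
        rw [setIntegral_congr_fun measurableSet_Iio hkernel, integral_neg,
          integral_Iio_integral_Ioc_sub_rpow_mul_exp_mul_swap hν₀ hν₁]
    _ = -∫ u in Ioc 0 1, u ^ (-ν) * exp (u * x) := by
        rw [setIntegral_congr_fun measurableSet_Ioc fun u hu =>
          integral_Iio_sub_rpow_mul_exp_mul hν₀ hu.1 x]
        simp_rw [mul_assoc, integral_const_mul]
        rw [one_div, mul_neg, inv_mul_cancel_left₀ hΓ]
    _ = -((-x) ^ (ν - 1)) * lowerGamma (1 - ν) (-x) := by
        rw [hlowerGamma, neg_mul, ← mul_assoc, ← rpow_add (neg_pos.2 hx),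
          show ν - 1 + (1 - ν) = 0 by ring, rpow_zero, one_mul]
end
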